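/- arXiv:1701.04045 — 2 statements merged into one kernel-verified Lean document; each statement's English description precedes it below -/
import Mathlib

section
/- Let A = (Q, Σ, Δ, q0, F) be an NFA, q ∈ Q a state, and s ∈ Σ* a string such that there exist two distinct runs of A from q to q both labeled by s. Then for every state p ∈ Q and every string w ∈ Σ*, the number of distinct runs of A from p to q labeled by the concatenation w·s is at least twice the number of distinct runs of A from p to q labeled by w. -/
/-- A nondeterministic finite automaton `A = (Q, Σ, Δ, q0, F)` with state type `Q`,
alphabet `A`, transition function `δ`, initial state `q0` and accepting states `F`. -/
structure NFA' (Q A : Type*) where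
  δ : Q → A → Set Q
  q0 : Q
  F : Set Q

namespace NFA'

variable {Q A : Type*}

/-- `ρ` is a run of the automaton labeled by the word `w`: the state sequence
`ρ 0, ρ 1, …, ρ |w|` follows transitions of `M` along the letters of `w`. -/
def IsRunOn (M : NFA' Q A) (w : List A) (ρ : Fin (w.length + 1) → Q) : Prop :=
  ∀ i : Fin w.length, ρ i.succ ∈ M.δ (ρ i.castSucc) (w.get i)

/-- The set of runs of `M` from `p` to `r` labeled by the word `w`,
represented by their state sequences. -/
def Runs (M : NFA' Q A) (p r : Q) (w : List A) : Set (Fin (w.length + 1) → Q) :=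
  {ρ | ρ 0 = p ∧ ρ (Fin.last w.length) = r ∧ M.IsRunOn w ρ}

end NFA'

/-- `wordPow s k` is the `k`-fold concatenation `s^k` of the word `s`. -/
def wordPow {A : Type*} (s : List A) : ℕ → List A
  | 0 => []
  | k + 1 => s ++ wordPow s k

/-!
Concatenating a run from `p` to `q` on `u` with a run from `q` to `r` on `v` gives a run
from `p` to `r` on `u ++ v`, and the pair can be read back off the concatenation, so
`#Runs(p, q, u) · #Runs(q, r, v) ≤ #Runs(p, r, u ++ v)`. With `#Runs(q, q, s) ≥ 2` this
is the claimed doubling.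
-/

namespace NFA'

variable {Q A : Type*} {u v : List A} {ρ ρ' : Fin (u.length + 1) → Q}
  {σ σ' : Fin (v.length + 1) → Q}

/-- Position `u.length` is shared by both runs; it is read from `ρ`, which is harmless when
`ρ` ends where `σ` starts. -/
def appendRun (ρ : Fin (u.length + 1) → Q) (σ : Fin (v.length + 1) → Q) :
    Fin ((u ++ v).length + 1) → Q :=
  fun i => if h : (i : ℕ) ≤ u.length then ρ ⟨i, by omega⟩
    else σ ⟨i - u.length, by have := i.isLt; simp only [List.length_append] at this; omega⟩

theorem appendRun_apply_of_le {i : ℕ} (hi : i ≤ u.length) (hi' : i < (u ++ v).length + 1) :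
    appendRun ρ σ ⟨i, hi'⟩ = ρ ⟨i, by omega⟩ :=
  dif_pos hi

theorem appendRun_apply_add (hρσ : ρ (Fin.last _) = σ 0) {j : ℕ} (hj : j < v.length + 1) :
    appendRun ρ σ ⟨u.length + j, by simp; omega⟩ = σ ⟨j, hj⟩ := by
  rcases j.eq_zero_or_pos with rfl | hj₀
  · exact (appendRun_apply_of_le le_rfl _).trans hρσ
  · exact (dif_neg (show ¬ u.length + j ≤ u.length by omega)).trans (by simp)

theorem appendRun_mem_runs {M : NFA' Q A} {p q r : Q} (hρ : ρ ∈ M.Runs p q u)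
    (hσ : σ ∈ M.Runs q r v) : appendRun ρ σ ∈ M.Runs p r (u ++ v) := by
  obtain ⟨hρ₀, hρ_last, hρ_run⟩ := hρ
  obtain ⟨hσ₀, hσ_last, hσ_run⟩ := hσ
  have hρσ : ρ (Fin.last _) = σ 0 := hρ_last.trans hσ₀.symm
  refine ⟨(appendRun_apply_of_le (Nat.zero_le _) _).trans hρ₀, ?_, ?_⟩
  · have hlast : Fin.last (u ++ v).length = ⟨u.length + v.length, by simp⟩ := by ext; simp
    rw [hlast, appendRun_apply_add hρσ (Nat.lt_succ_self _)]
    exact hσ_last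
  · rintro ⟨i, hi⟩
    rw [List.length_append] at hi
    rcases lt_or_ge i u.length with hiu | hiu
    · have := hρ_run ⟨i, hiu⟩
      simp only [Fin.succ_mk, Fin.castSucc_mk, List.get_eq_getElem] at this ⊢
      rwa [appendRun_apply_of_le hiu, appendRun_apply_of_le (by omega),
        List.getElem_append_left hiu]
    · obtain ⟨j, rfl⟩ := Nat.exists_eq_add_of_le hiu
      have := hσ_run ⟨j, by omega⟩
      simp only [Fin.succ_mk, Fin.castSucc_mk, List.get_eq_getElem, Nat.add_assoc] at this ⊢
      rw [appendRun_apply_add hρσ (by omega : j + 1 < v.length + 1),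
        appendRun_apply_add hρσ (by omega : j < v.length + 1)]
      simpa [List.getElem_append_right] using this

theorem appendRun_inj (h : ρ (Fin.last _) = σ 0) (h' : ρ' (Fin.last _) = σ' 0) :
    appendRun ρ σ = appendRun ρ' σ' ↔ ρ = ρ' ∧ σ = σ' := by
  refine ⟨fun heq => ⟨?_, ?_⟩, fun ⟨hρ, hσ⟩ => hρ ▸ hσ ▸ rfl⟩
  · funext ⟨i, hi⟩
    have := congrFun heq ⟨i, by simp; omega⟩
    rwa [appendRun_apply_of_le (by omega), appendRun_apply_of_le (by omega)] at this
  · funext ⟨j, hj⟩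
    have := congrFun heq ⟨u.length + j, by simp; omega⟩
    rwa [appendRun_apply_add h hj, appendRun_apply_add h' hj] at this

theorem encard_runs_mul_le (M : NFA' Q A) (p q r : Q) (u v : List A) :
    (M.Runs p q u).encard * (M.Runs q r v).encard ≤ (M.Runs p r (u ++ v)).encard := by
  rw [← Set.encard_prod]
  refine Set.encard_le_encard_of_injOn (f := fun x => appendRun x.1 x.2)
    (fun x hx => appendRun_mem_runs hx.1 hx.2) ?_
  rintro ⟨ρ, σ⟩ ⟨hρ, hσ⟩ ⟨ρ', σ'⟩ ⟨hρ', hσ'⟩ heq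
  obtain ⟨rfl, rfl⟩ :=
    (appendRun_inj (hρ.2.1.trans hσ.1.symm) (hρ'.2.1.trans hσ'.1.symm)).mp heq
  rfl

end NFA'

/-- If there are two distinct runs of `M` from `q` to `q` both labeled by `s`, then for
every state `p` and word `w`, the number of runs from `p` to `q` labeled by `w · s` is at
least twice the number of runs from `p` to `q` labeled by `w`. -/
theorem runs_append_loop_doubles {Q A : Type*} (M : NFA' Q A) (q : Q) (s : List A)
    (h : ∃ ρ₁ ρ₂, ρ₁ ∈ M.Runs q q s ∧ ρ₂ ∈ M.Runs q q s ∧ ρ₁ ≠ ρ₂) :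
    ∀ (p : Q) (w : List A),
      2 * (M.Runs p q w).encard ≤ (M.Runs p q (w ++ s)).encard := by
  intro p w
  have two_le : 2 ≤ (M.Runs q q s).encard :=
    Order.add_one_le_of_lt (Set.one_lt_encard_iff.mpr h)
  calc 2 * (M.Runs p q w).encard
      ≤ (M.Runs p q w).encard * (M.Runs q q s).encard := by rw [mul_comm]; gcongr
    _ ≤ (M.Runs p q (w ++ s)).encard := M.encard_runs_mul_le p q q w s
end

section
/- Let A = (Q, Σ, Δ, q0, F) be an NFA. Suppose there exist states q ∈ Q (the pivot) and q_r ∈ Q \ F, and strings s0, s, s1 ∈ Σ* such that: (i) there is a run of A from q0 to q labeled by s0 (the attack prefix), (ii) there exist two distinct runs of A from q to q both labeled by s (the attack core), and (iii) there is a run of A from q to q_r labeled by s1 (the attack suffix). Then for every natural number k, the number of distinct runs of A from q0 to q_r labeled by the concatenation s0·s^k·s1 is at least 2^k. -/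
/-!
Concatenating runs that meet at a common state is injective, so the number of runs is
supermultiplicative: `#Runs p r (w ++ v) ≥ #Runs p x w * #Runs x r v`. Iterating this on the two
distinct loops at the pivot gives at least `2 ^ k` runs of `s ^ k` from `q` back to `q`, and the
prefix and suffix runs each contribute a factor at least `1`.
-/

namespace NFA'

variable {Q A : Type*} {M : NFA' Q A}

theorem isRunOn_iff {w : List A} {ρ : Fin (w.length + 1) → Q} :
    M.IsRunOn w ρ ↔
      ∀ i (h : i < w.length), ρ ⟨i + 1, by omega⟩ ∈ M.δ (ρ ⟨i, by omega⟩) w[i] :=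
  Fin.forall_iff

theorem nil_mem_runs (q : Q) : (fun _ => q) ∈ M.Runs q q [] :=
  ⟨rfl, rfl, fun i => i.elim0⟩

def runAppend {w v : List A} (ρ : Fin (w.length + 1) → Q) (σ : Fin (v.length + 1) → Q) :
    Fin ((w ++ v).length + 1) → Q := fun i =>
  if h : (i : ℕ) ≤ w.length then ρ ⟨i, by omega⟩
  else σ ⟨i - w.length, by have := i.isLt; simp only [List.length_append] at this; omega⟩

section runAppend

variable {w v : List A} {ρ : Fin (w.length + 1) → Q} {σ : Fin (v.length + 1) → Q}

theorem runAppend_mk_of_le {i : ℕ} (hi : i < (w ++ v).length + 1) (h : i ≤ w.length) :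
    runAppend ρ σ ⟨i, hi⟩ = ρ ⟨i, by omega⟩ :=
  dif_pos h

theorem runAppend_mk_of_ge (hjoin : ρ (Fin.last _) = σ 0) {i : ℕ}
    (hi : i < (w ++ v).length + 1) (h : w.length ≤ i) :
    runAppend ρ σ ⟨i, hi⟩ =
      σ ⟨i - w.length, by simp only [List.length_append] at hi; omega⟩ := by
  unfold runAppend
  split_ifs with h'
  · obtain rfl : i = w.length := le_antisymm h' h
    simp only [Nat.sub_self]
    exact hjoin
  · rfl

theorem runAppend_mem {p x r : Q} (hρ : ρ ∈ M.Runs p x w) (hσ : σ ∈ M.Runs x r v) :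
    runAppend ρ σ ∈ M.Runs p r (w ++ v) := by
  obtain ⟨hρ0, hρlast, hρrun⟩ := hρ
  obtain ⟨hσ0, hσlast, hσrun⟩ := hσ
  have hjoin : ρ (Fin.last _) = σ 0 := hρlast.trans hσ0.symm
  have hlen : (w ++ v).length = w.length + v.length := List.length_append
  refine ⟨?_, ?_, ?_⟩
  · exact (runAppend_mk_of_le _ (Nat.zero_le _)).trans hρ0
  · refine (runAppend_mk_of_ge hjoin _ (by omega)).trans ?_
    convert hσlast using 2
    ext
    simp only [Fin.val_last]
    omega
  · rw [isRunOn_iff] at hρrun hσrun ⊢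
    intro i hi
    rcases lt_or_ge i w.length with hiw | hiw
    · rw [runAppend_mk_of_le _ (by omega), runAppend_mk_of_le _ (by omega),
        List.getElem_append_left hiw]
      exact hρrun i hiw
    · rw [runAppend_mk_of_ge hjoin _ (by omega), runAppend_mk_of_ge hjoin _ (by omega),
        List.getElem_append_right hiw]
      convert hσrun (i - w.length) (by omega) using 3
      omega

end runAppend

theorem runAppend_injOn {p x r : Q} {w v : List A} :
    Set.InjOn (fun ρσ => runAppend ρσ.1 ρσ.2) (M.Runs p x w ×ˢ M.Runs x r v) := by
  rintro ⟨ρ, σ⟩ ⟨hρ, hσ⟩ ⟨ρ', σ'⟩ ⟨hρ', hσ'⟩ h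
  have hjoin : ρ (Fin.last _) = σ 0 := hρ.2.1.trans hσ.1.symm
  have hjoin' : ρ' (Fin.last _) = σ' 0 := hρ'.2.1.trans hσ'.1.symm
  have hlen : (w ++ v).length = w.length + v.length := List.length_append
  simp only at h
  refine Prod.ext (funext fun i => ?_) (funext fun j => ?_)
  · have := congrFun h ⟨i, by omega⟩
    rwa [runAppend_mk_of_le _ (by omega), runAppend_mk_of_le _ (by omega)] at this
  · have := congrFun h ⟨w.length + j, by omega⟩
    rw [runAppend_mk_of_ge hjoin _ (by omega), runAppend_mk_of_ge hjoin' _ (by omega)] at this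
    simpa using this

theorem encard_runs_mul_le_encard_runs_append (p x r : Q) (w v : List A) :
    (M.Runs p x w).encard * (M.Runs x r v).encard ≤ (M.Runs p r (w ++ v)).encard := by
  rw [← Set.encard_prod, ← runAppend_injOn.encard_image]
  apply Set.encard_le_encard
  rintro _ ⟨⟨ρ, σ⟩, ⟨hρ, hσ⟩, rfl⟩
  exact runAppend_mem hρ hσ

theorem encard_runs_pow_le_encard_runs_wordPow (q : Q) (s : List A) (k : ℕ) :
    (M.Runs q q s).encard ^ k ≤ (M.Runs q q (wordPow s k)).encard := by
  induction k with
  | zero => simpa using ⟨_, nil_mem_runs q⟩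
  | succ k ih =>
    calc (M.Runs q q s).encard ^ (k + 1)
        = (M.Runs q q s).encard * (M.Runs q q s).encard ^ k := pow_succ' _ _
      _ ≤ (M.Runs q q s).encard * (M.Runs q q (wordPow s k)).encard := by gcongr
      _ ≤ (M.Runs q q (wordPow s (k + 1))).encard :=
        encard_runs_mul_le_encard_runs_append _ _ _ _ _

end NFA'

open NFA' in
theorem hyperVulnerable_exponential_runs_general {Q A : Type*} (M : NFA' Q A) (q qr : Q)
    (s₀ s s₁ : List A)
    (hpre : (M.Runs M.q0 q s₀).Nonempty)
    (hcore : ∃ ρ₁ ρ₂, ρ₁ ∈ M.Runs q q s ∧ ρ₂ ∈ M.Runs q q s ∧ ρ₁ ≠ ρ₂)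
    (hsuf : (M.Runs q qr s₁).Nonempty) :
    ∀ k : ℕ, (2 ^ k : ℕ∞) ≤ (M.Runs M.q0 qr (s₀ ++ wordPow s k ++ s₁)).encard := by
  intro k
  have hpre₁ : 1 ≤ (M.Runs M.q0 q s₀).encard := Set.one_le_encard_iff_nonempty.2 hpre
  have hsuf₁ : 1 ≤ (M.Runs q qr s₁).encard := Set.one_le_encard_iff_nonempty.2 hsuf
  have hcore₂ : 2 ≤ (M.Runs q q s).encard :=
    Order.add_one_le_of_lt (Set.one_lt_encard_iff.2 hcore)
  calc (2 ^ k : ℕ∞)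
      ≤ 1 * (M.Runs q q s).encard ^ k * 1 := by
        simpa using pow_le_pow_left₀ (by simp) hcore₂ k
    _ ≤ (M.Runs M.q0 q s₀).encard * (M.Runs q q (wordPow s k)).encard *
          (M.Runs q qr s₁).encard := by
      gcongr; exact encard_runs_pow_le_encard_runs_wordPow q s k
    _ ≤ (M.Runs M.q0 q (s₀ ++ wordPow s k)).encard * (M.Runs q qr s₁).encard := by
      gcongr; exact encard_runs_mul_le_encard_runs_append _ _ _ _ _
    _ ≤ _ := encard_runs_mul_le_encard_runs_append _ _ _ _ _

/-- If `M` has a pivot state `q` reachable from `q0` via `s0`, two distinct loops at `q`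
labeled by the attack core `s`, and a path from `q` to a non-accepting state `q_r` labeled
by `s1`, then the number of distinct runs from `q0` to `q_r` labeled by `s0 · s^k · s1`
is at least `2^k`. -/
theorem hyperVulnerable_exponential_runs {Q A : Type*} (M : NFA' Q A) (q qr : Q)
    (hqr : qr ∉ M.F) (s₀ s s₁ : List A)
    (hpre : (M.Runs M.q0 q s₀).Nonempty)
    (hcore : ∃ ρ₁ ρ₂, ρ₁ ∈ M.Runs q q s ∧ ρ₂ ∈ M.Runs q q s ∧ ρ₁ ≠ ρ₂)
    (hsuf : (M.Runs q qr s₁).Nonempty) :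
    ∀ k : ℕ, (2 ^ k : ℕ∞) ≤ (M.Runs M.q0 qr (s₀ ++ wordPow s k ++ s₁)).encard :=
  hyperVulnerable_exponential_runs_general M q qr s₀ s s₁ hpre hcore hsuf
end
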